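/- Let m be a non-negative integer and let G be a locally convex geometric graph such that |DJ(uv)| ≤ m for every edge uv ∈ E(G). Then |E(G)| ≤ |V(G)|·(√(1+8m)+3)/4. -/

import Mathlib

open scoped Classical

noncomputable section

abbrev Pt : Type := EuclideanSpace ℝ (Fin 2)

instance : Fact (Module.finrank ℝ Pt = 2) := ⟨finrank_euclideanSpace_fin⟩

noncomputable instance : Module.Oriented ℝ Pt (Fin 2) :=
  ⟨(EuclideanSpace.basisFun (Fin 2) ℝ).toBasis.orientation⟩

/-- A (combinatorial datum of a) geometric graph: a finite set of vertices (points of the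
plane) together with a finite set of edges (unordered pairs of points). -/
structure GeomGraph where
  verts : Finset Pt
  edges : Finset (Sym2 Pt)

/-- `G` is a geometric graph: edges are non-degenerate pairs of vertices, and the vertices
are in general position (no three collinear). -/
def GeomGraph.IsGeometric (G : GeomGraph) : Prop :=
  (∀ e ∈ G.edges, ¬ e.IsDiag ∧ ∀ p ∈ e, p ∈ G.verts) ∧
  ∀ p ∈ G.verts, ∀ q ∈ G.verts, ∀ r ∈ G.verts,
    p ≠ q → p ≠ r → q ≠ r → ¬ Collinear ℝ ({p, q, r} : Set Pt)

/-- The closed straight-line segment realizing an edge. -/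
def edgeSeg (e : Sym2 Pt) : Set Pt :=
  Sym2.lift ⟨fun u v => segment ℝ u v, fun u v => segment_symm ℝ u v⟩ e

/-- Two edges are disjoint if their closed segments do not intersect. -/
def EdgesDisjoint (e f : Sym2 Pt) : Prop := edgeSeg e ∩ edgeSeg f = ∅

/-- `DJedge G e` is the set of edges of `G` disjoint from `e`. -/
def DJedge (G : GeomGraph) (e : Sym2 Pt) : Finset (Sym2 Pt) :=
  G.edges.filter (fun f => EdgesDisjoint e f)

/-- `DJpairs G` is the set of unordered pairs of disjoint edges of `G`. -/
def DJpairs (G : GeomGraph) : Finset (Sym2 (Sym2 Pt)) :=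
  G.edges.sym2.filter (fun pr => ∃ e f, pr = s(e, f) ∧ EdgesDisjoint e f)

/-- The neighborhood of a vertex. -/
def nbhd (G : GeomGraph) (v : Pt) : Finset Pt :=
  G.verts.filter (fun w => s(v, w) ∈ G.edges)

/-- The degree of a vertex. -/
def deg (G : GeomGraph) (v : Pt) : ℕ := (nbhd G v).card

/-- A geometric graph is locally convex if every vertex lies outside the convex hull of
its neighborhood. -/
def GeomGraph.LocallyConvex (G : GeomGraph) : Prop :=
  ∀ v ∈ G.verts, v ∉ convexHull ℝ (nbhd G v : Set Pt)

/-- The oriented angle `∠ x y z ∈ (-π, π]`, measured counterclockwise from the ray `yx`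
to the ray `yz`. -/
def oangle (x y z : Pt) : ℝ := (EuclideanGeometry.oangle x y z).toReal


namespace CPS

def cr (x y : Pt) : ℝ := x 0 * y 1 - x 1 * y 0

lemma sub_app (x y : Pt) (i : Fin 2) : (x - y) i = x i - y i := rfl

lemma cr_swap (x y : Pt) : cr x y = - cr y x := by simp only [cr]; ring
lemma cr_self (x : Pt) : cr x x = 0 := by simp only [cr]; ring

lemma cr_shift (u v b : Pt) : cr (v - u) (b - u) = cr (v - u) (b - v) := by
  simp only [cr, sub_app]; ring

lemma cr_third (u v b : Pt) : cr (u - b) (v - b) = - cr (u - v) (b - v) := by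
  simp only [cr, sub_app]; ring

lemma cr_opp (u v b : Pt) : cr (v - u) (b - v) = - cr (u - v) (b - v) := by
  simp only [cr, sub_app]; ring

lemma point_decomp (x : Pt) :
    x = x 0 • (EuclideanSpace.single (0 : Fin 2) (1:ℝ))
      + x 1 • (EuclideanSpace.single (1 : Fin 2) (1:ℝ)) := by
  ext i
  fin_cases i <;>
    simp [EuclideanSpace.single_apply]

lemma lin_decomp (F : Pt →L[ℝ] ℝ) (x : Pt) :
    F x = x 0 * F (EuclideanSpace.single (0 : Fin 2) (1:ℝ))
        + x 1 * F (EuclideanSpace.single (1 : Fin 2) (1:ℝ)) := by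
  conv_lhs => rw [point_decomp x]
  simp

lemma cr_jacobi (F : Pt →L[ℝ] ℝ) (A B C : Pt) :
    cr A B * F C + cr B C * F A + cr C A * F B = 0 := by
  rw [lin_decomp F A, lin_decomp F B, lin_decomp F C]
  simp only [cr]
  ring

lemma cr_trans_aux (F : Pt →L[ℝ] ℝ) (v a b c : Pt)
    (hFa : F v < F a) (hFb : F v < F b) (hFc : F v < F c)
    (h1 : 0 < cr (a - v) (b - v)) (h2 : 0 < cr (b - v) (c - v)) :
    0 < cr (a - v) (c - v) := by
  have hj := cr_jacobi F (a - v) (b - v) (c - v)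
  have hFa' : 0 < F (a - v) := by rw [map_sub]; linarith
  have hFb' : 0 < F (b - v) := by rw [map_sub]; linarith
  have hFc' : 0 < F (c - v) := by rw [map_sub]; linarith
  have h3 : cr (c - v) (a - v) * F (b - v) < 0 := by
    nlinarith [mul_pos h1 hFc', mul_pos h2 hFa']
  have h4 : cr (c - v) (a - v) < 0 := by
    by_contra hcon
    push_neg at hcon
    nlinarith [mul_nonneg hcon hFb'.le]
  have := cr_swap (c - v) (a - v)
  linarith

-- zero cross implies collinear
lemma collinear_of_cr_eq_zero {v u w : Pt} (huv : u ≠ v)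
    (h : cr (u - v) (w - v) = 0) : Collinear ℝ ({v, u, w} : Set Pt) := by
  rw [collinear_iff_of_mem (Set.mem_insert v {u, w})]
  refine ⟨u - v, ?_⟩
  rintro p (rfl | rfl | rfl)
  · exact ⟨0, by simp⟩
  · exact ⟨1, by simp⟩
  · -- p = r • (u-v) + v
    have hd : u - v ≠ 0 := sub_ne_zero_of_ne huv
    have happ : ∀ (r : ℝ) (y z : Pt) (j : Fin 2), (r • y +ᵥ z) j = r * y j + z j :=
      fun _ _ _ _ => rfl
    have hcases : (u - v) 0 ≠ 0 ∨ (u - v) 1 ≠ 0 := by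
      by_contra hcon
      push_neg at hcon
      apply hd
      ext i
      fin_cases i
      · simpa using hcon.1
      · simpa using hcon.2
    simp only [cr, sub_app] at h hcases
    rcases hcases with h0 | h1
    · refine ⟨(p 0 - v 0) / (u 0 - v 0), ?_⟩
      ext i
      fin_cases i <;> rw [happ] <;> simp only [sub_app, Fin.zero_eta, Fin.mk_one]
      · field_simp; ring
      · field_simp
        linear_combination h
    · refine ⟨(p 1 - v 1) / (u 1 - v 1), ?_⟩
      ext i
      fin_cases i <;> rw [happ] <;> simp only [sub_app, Fin.zero_eta, Fin.mk_one]
      · field_simp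
        linear_combination -h
      · field_simp; ring
-- ===== graph level =====
variable (G : GeomGraph)

lemma mem_nbhd {v u : Pt} : u ∈ nbhd G v ↔ u ∈ G.verts ∧ s(v, u) ∈ G.edges := by
  simp [nbhd]

variable {G}

lemma edge_of_mem_nbhd {v u : Pt} (h : u ∈ nbhd G v) : s(v, u) ∈ G.edges :=
  ((mem_nbhd G).1 h).2

lemma verts_of_mem_nbhd {v u : Pt} (h : u ∈ nbhd G v) : u ∈ G.verts :=
  ((mem_nbhd G).1 h).1

lemma ne_of_mem_nbhd (hG : G.IsGeometric) {v u : Pt} (h : u ∈ nbhd G v) : u ≠ v := by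
  have hd := (hG.1 _ (edge_of_mem_nbhd h)).1
  intro hvu
  exact hd (by rw [hvu] at *; exact (Sym2.mk_isDiag_iff).2 rfl)

lemma nbhd_symm {v u : Pt} (hv : v ∈ G.verts) (h : u ∈ nbhd G v) : v ∈ nbhd G u := by
  rw [mem_nbhd]
  exact ⟨hv, by rw [Sym2.eq_swap]; exact edge_of_mem_nbhd h⟩

lemma exists_sep (hconv : G.LocallyConvex) {v : Pt} (hv : v ∈ G.verts) :
    ∃ F : Pt →L[ℝ] ℝ, ∀ w ∈ nbhd G v, F v < F w := by
  have h := hconv v hv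
  have hcl : IsClosed (convexHull ℝ ((nbhd G v : Finset Pt) : Set Pt)) :=
    ((nbhd G v).finite_toSet.isCompact_convexHull (𝕜 := ℝ)).isClosed
  obtain ⟨F, c, hFc, hcb⟩ :=
    geometric_hahn_banach_point_closed (convex_convexHull ℝ _) hcl h
  refine ⟨F, fun w hw => lt_trans hFc (hcb w (subset_convexHull ℝ _ ?_))⟩
  exact_mod_cast hw

lemma cr_ne (hG : G.IsGeometric) {v u w : Pt} (hv : v ∈ G.verts) (hu : u ∈ G.verts)
    (hw : w ∈ G.verts) (huv : u ≠ v) (hwv : w ≠ v) (huw : u ≠ w) :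
    cr (u - v) (w - v) ≠ 0 := by
  intro h0
  exact hG.2 v hv u hu w hw (Ne.symm huv) (Ne.symm hwv) huw (collinear_of_cr_eq_zero huv h0)

/-- transitivity of the angular order at `v`. -/
lemma cr_trans (hconv : G.LocallyConvex) {v a b c : Pt} (hv : v ∈ G.verts)
    (ha : a ∈ nbhd G v) (hb : b ∈ nbhd G v) (hc : c ∈ nbhd G v)
    (h1 : 0 < cr (a - v) (b - v)) (h2 : 0 < cr (b - v) (c - v)) :
    0 < cr (a - v) (c - v) := by
  obtain ⟨F, hF⟩ := exists_sep hconv hv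
  exact cr_trans_aux F v a b c (hF a ha) (hF b hb) (hF c hc) h1 h2

/-- existence of the angular maximum (`leftmost neighbour`). -/
lemma exists_amax (hG : G.IsGeometric) (hconv : G.LocallyConvex) {v : Pt}
    (hv : v ∈ G.verts) (hne : (nbhd G v).Nonempty) :
    ∃ a ∈ nbhd G v, ∀ w ∈ nbhd G v, w ≠ a → 0 < cr (w - v) (a - v) := by
  have key : ∀ s : Finset Pt, s.Nonempty → s ⊆ nbhd G v →
      ∃ a ∈ s, ∀ w ∈ s, w ≠ a → 0 < cr (w - v) (a - v) := by
    intro s hs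
    induction hs using Finset.Nonempty.cons_induction with
    | singleton x =>
      intro _
      exact ⟨x, Finset.mem_singleton_self x, fun w hw hne' =>
        absurd (Finset.mem_singleton.1 hw) hne'⟩
    | cons x s hx hs ih =>
      intro hsub
      have hsub' : s ⊆ nbhd G v := fun y hy => hsub (Finset.mem_cons_of_mem hy)
      have hxv : x ∈ nbhd G v := hsub (Finset.mem_cons_self x s)
      obtain ⟨a, has, hamax⟩ := ih hsub'
      have hav : a ∈ nbhd G v := hsub' has
      have hxa : x ≠ a := fun h => hx (h ▸ has)
      have htri := cr_ne hG hv (verts_of_mem_nbhd hxv) (verts_of_mem_nbhd hav)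
        (ne_of_mem_nbhd hG hxv) (ne_of_mem_nbhd hG hav) hxa
      rcases lt_trichotomy (cr (x - v) (a - v)) 0 with hlt | heq | hgt
      · -- x is the new maximum
        refine ⟨x, Finset.mem_cons_self x s, fun w hw hwx => ?_⟩
        rcases Finset.mem_cons.1 hw with rfl | hws
        · exact absurd rfl hwx
        · have hwv : w ∈ nbhd G v := hsub' hws
          have hax : 0 < cr (a - v) (x - v) := by
            have := cr_swap (x - v) (a - v); linarith
          rcases eq_or_ne w a with rfl | hwa
          · exact hax
          · exact cr_trans hconv hv hwv hav hxv (hamax w hws hwa) hax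
      · exact absurd heq htri
      · -- a stays maximum
        refine ⟨a, Finset.mem_cons_of_mem has, fun w hw hwa => ?_⟩
        rcases Finset.mem_cons.1 hw with rfl | hws
        · exact hgt
        · exact hamax w hws hwa
  exact key (nbhd G v) hne (Finset.Subset.refl _)

/-- number of neighbours of `v` strictly to the left of the ray `v → u`. -/
def lam (G : GeomGraph) (v u : Pt) : ℕ :=
  ((nbhd G v).filter (fun b => 0 < cr (u - v) (b - v))).card

lemma lam_lt (hconv : G.LocallyConvex) {v u u' : Pt} (hv : v ∈ G.verts)
    (hu : u ∈ nbhd G v) (hu' : u' ∈ nbhd G v) (h : 0 < cr (u - v) (u' - v)) :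
    lam G v u' < lam G v u := by
  apply Finset.card_lt_card
  rw [Finset.ssubset_iff_of_subset]
  · refine ⟨u', Finset.mem_filter.2 ⟨hu', h⟩, fun hc => ?_⟩
    have := (Finset.mem_filter.1 hc).2
    rw [cr_self] at this
    exact lt_irrefl 0 this
  · intro b hb
    rw [Finset.mem_filter] at hb ⊢
    exact ⟨hb.1, cr_trans hconv hv hu hu' hb.1 h hb.2⟩

lemma lam_ne (hG : G.IsGeometric) (hconv : G.LocallyConvex) {v u u' : Pt}
    (hv : v ∈ G.verts) (hu : u ∈ nbhd G v) (hu' : u' ∈ nbhd G v) (hne : u ≠ u') :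
    lam G v u ≠ lam G v u' := by
  have := cr_ne hG hv (verts_of_mem_nbhd hu) (verts_of_mem_nbhd hu')
    (ne_of_mem_nbhd hG hu) (ne_of_mem_nbhd hG hu') hne
  rcases this.lt_or_gt with h | h
  · exact (lam_lt hconv hv hu' hu (by have := cr_swap (u - v) (u' - v); linarith)).ne
  · exact (lam_lt hconv hv hu hu' h).ne'

lemma lam_max_eq_zero {v a : Pt} (ha : a ∈ nbhd G v)
    (hmax : ∀ w ∈ nbhd G v, w ≠ a → 0 < cr (w - v) (a - v)) : lam G v a = 0 := by
  rw [lam, Finset.card_eq_zero, Finset.eq_empty_iff_forall_notMem]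
  intro b hb
  rw [Finset.mem_filter] at hb
  rcases eq_or_ne b a with rfl | hba
  · rw [cr_self] at hb; exact lt_irrefl 0 hb.2
  · have := hmax b hb.1 hba
    have h2 := cr_swap (a - v) (b - v)
    linarith [hb.2]

lemma disjoint_core {u a v b : Pt} (huv : u ≠ v)
    (ha : 0 < cr (v - u) (a - u)) (hb : cr (v - u) (b - v) < 0) :
    EdgesDisjoint s(u, a) s(v, b) := by
  have e1 : edgeSeg s(u, a) = segment ℝ u a := by simp [edgeSeg]
  have e2 : edgeSeg s(v, b) = segment ℝ v b := by simp [edgeSeg]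
  unfold EdgesDisjoint
  rw [e1, e2, Set.eq_empty_iff_forall_notMem]
  rintro x ⟨hx1, hx2⟩
  obtain ⟨p, q, hp, hq, hpq, hx⟩ := hx1
  obtain ⟨r, t, hr, ht, hrt, hx'⟩ := hx2
  have hx0 : x 0 = p * u 0 + q * a 0 := by rw [← hx]; rfl
  have hx1' : x 1 = p * u 1 + q * a 1 := by rw [← hx]; rfl
  have hy0 : x 0 = r * v 0 + t * b 0 := by rw [← hx']; rfl
  have hy1 : x 1 = r * v 1 + t * b 1 := by rw [← hx']; rfl
  have hp' : p = 1 - q := by linarith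
  have hr' : r = 1 - t := by linarith
  have key1 : cr (v - u) (x - u) = q * cr (v - u) (a - u) := by
    simp only [cr, sub_app, hx0, hx1', hp']; ring
  have key2 : cr (v - u) (x - u) = t * cr (v - u) (b - v) := by
    simp only [cr, sub_app, hy0, hy1, hr']; ring
  have h0 : q * cr (v - u) (a - u) = t * cr (v - u) (b - v) := by rw [← key1, key2]
  have hq0 : q = 0 := by nlinarith
  have ht0 : t = 0 := by nlinarith
  apply huv
  have hxu : x = u := by
    rw [hp', hq0] at hx
    simpa using hx.symm
  have hxv : x = v := by
    rw [hr', ht0] at hx'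
    simpa using hx'.symm
  rw [← hxu, ← hxv]

/-- Key count: all certified disjoint edges of the extreme edge `s(u,a)`. -/
lemma core_count (hG : G.IsGeometric) (hconv : G.LocallyConvex) {u a : Pt}
    (hu : u ∈ G.verts) (ha : a ∈ nbhd G u)
    (hmax : ∀ w ∈ nbhd G u, w ≠ a → 0 < cr (w - u) (a - u)) :
    ∑ v ∈ (nbhd G u).erase a, lam G v u ≤ (DJedge G s(u, a)).card := by
  have hcs : ∑ v ∈ (nbhd G u).erase a, lam G v u =
      (((nbhd G u).erase a).sigma
        (fun v => (nbhd G v).filter (fun b => 0 < cr (u - v) (b - v)))).card := by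
    rw [Finset.card_sigma]
    simp [lam]
  rw [hcs]
  apply Finset.card_le_card_of_injOn (fun p => s(p.1, p.2))
  · rintro ⟨v, b⟩ hvb
    rw [Finset.mem_coe, Finset.mem_sigma] at hvb
    obtain ⟨hv, hb⟩ := hvb
    rw [Finset.mem_filter] at hb
    have hvn : v ∈ nbhd G u := Finset.mem_of_mem_erase hv
    have hva : v ≠ a := Finset.ne_of_mem_erase hv
    rw [Finset.mem_coe, DJedge, Finset.mem_filter]
    refine ⟨edge_of_mem_nbhd hb.1, ?_⟩
    apply disjoint_core (Ne.symm (ne_of_mem_nbhd hG hvn)) (hmax v hvn hva)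
    have := cr_opp u v b
    linarith [hb.2]
  · rintro ⟨v, b⟩ hvb ⟨v', b'⟩ hvb' heq
    simp only [Finset.mem_coe, Finset.mem_sigma, Finset.mem_filter] at hvb hvb'
    simp only [Sym2.eq_iff] at heq
    rcases heq with ⟨rfl, rfl⟩ | ⟨rfl, rfl⟩
    · rfl
    · exfalso
      have h1 := hvb.2.2
      have h2 := hvb'.2.2
      have := cr_third u v b
      linarith

/-- a finset of distinct positive naturals of size `c` has sum at least `c(c+1)/2`. -/
lemma nat_sum_distinct : ∀ (t : Finset ℕ), (∀ x ∈ t, 1 ≤ x) →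
    t.card * (t.card + 1) ≤ 2 * ∑ x ∈ t, x := by
  intro t
  induction t using Finset.induction_on_max with
  | empty => intro _; simp
  | insert a s hlt ih =>
    intro h1
    have hnotmem : a ∉ s := fun hmem => lt_irrefl a (hlt a hmem)
    have hall : ∀ x ∈ s, 1 ≤ x := fun x hx => h1 x (Finset.mem_insert_of_mem hx)
    have hih := ih hall
    have ha1 : 1 ≤ a := h1 a (Finset.mem_insert_self a s)
    have hsub : s ⊆ Finset.Icc 1 (a - 1) := by
      intro x hx
      rw [Finset.mem_Icc]
      exact ⟨hall x hx, Nat.le_sub_one_of_lt (hlt x hx)⟩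
    have hcard : s.card + 1 ≤ a := by
      have h2 := Finset.card_le_card hsub
      rw [Nat.card_Icc] at h2
      omega
    rw [Finset.sum_insert hnotmem, Finset.card_insert_of_notMem hnotmem]
    nlinarith

lemma key_of (n s S2 mR : ℝ) (hn : 0 ≤ n) (hCS : s ^ 2 ≤ n * S2)
    (hq : S2 + s ≤ 2 * mR * n) : s ^ 2 + n * s ≤ 2 * mR * n ^ 2 := by
  nlinarith [mul_le_mul_of_nonneg_left hq hn]

lemma sqrt_bound (n s mR : ℝ) (hn : 0 ≤ n) (hs : 0 ≤ s) (hm : 0 ≤ mR)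
    (hkey : s ^ 2 + n * s ≤ 2 * mR * n ^ 2) :
    s ≤ n * (Real.sqrt (1 + 8 * mR) - 1) / 2 := by
  set k : ℝ := Real.sqrt (1 + 8 * mR) with hkdef
  have hk2 : k ^ 2 = 1 + 8 * mR := Real.sq_sqrt (by positivity)
  have hk1 : (1 : ℝ) ≤ k := by
    calc (1 : ℝ) = Real.sqrt 1 := Real.sqrt_one.symm
      _ ≤ k := Real.sqrt_le_sqrt (by linarith)
  by_contra hcon
  push_neg at hcon
  have hc0 : 0 ≤ n * (k - 1) / 2 :=
    div_nonneg (mul_nonneg hn (by linarith)) (by norm_num)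
  have hspos : 0 < s := lt_of_le_of_lt hc0 hcon
  have hfac : 0 < (s - n * (k - 1) / 2) * (s + n * (k - 1) / 2 + n) := by
    apply mul_pos (by linarith)
    linarith
  nlinarith [hfac, hkey, hk2]

lemma final_bound (e n s mR : ℝ) (hn : 0 ≤ n) (hs : 0 ≤ s) (hm : 0 ≤ mR)
    (hkey : s ^ 2 + n * s ≤ 2 * mR * n ^ 2) (h3 : 2 * e ≤ 2 * n + s) :
    e ≤ n * (Real.sqrt (1 + 8 * mR) + 3) / 4 := by
  have := sqrt_bound n s mR hn hs hm hkey
  linarith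

end CPS

open CPS in
/-- **Theorem 1, Case 1.** If `G` is a locally convex geometric graph in which every edge is
disjoint from at most `m` other edges, then `|E(G)| ≤ |V(G)|·(√(1+8m)+3)/4`. -/
theorem edge_bound_of_bounded_disjointness_locallyConvex (m : ℕ) (G : GeomGraph)
    (hG : G.IsGeometric) (hconv : G.LocallyConvex)
    (hm : ∀ e ∈ G.edges, (DJedge G e).card ≤ m) :
    (G.edges.card : ℝ) ≤ (G.verts.card : ℝ) * (Real.sqrt (1 + 8 * m) + 3) / 4 := by
  classical
  -- the leftmost-neighbour map
  have hAex : ∀ v, v ∈ G.verts → (nbhd G v).Nonempty →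
      ∃ a, a ∈ nbhd G v ∧ ∀ w ∈ nbhd G v, w ≠ a → 0 < cr (w - v) (a - v) := by
    intro v hv hne
    obtain ⟨a, h1, h2⟩ := exists_amax hG hconv hv hne
    exact ⟨a, h1, h2⟩
  set A : Pt → Pt := fun v => if h : v ∈ G.verts ∧ (nbhd G v).Nonempty then
      (hAex v h.1 h.2).choose else v with hAdef
  have hA : ∀ v (h : v ∈ G.verts ∧ (nbhd G v).Nonempty),
      A v ∈ nbhd G v ∧ ∀ w ∈ nbhd G v, w ≠ A v → 0 < cr (w - v) (A v - v) := by
    intro v h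
    rw [hAdef]
    simp only [dif_pos h]
    exact (hAex v h.1 h.2).choose_spec
  -- the two-sided-positive-rank neighbours
  set NZ : Pt → Finset Pt := fun v => (nbhd G v).filter
      (fun u => 1 ≤ lam G v u ∧ 1 ≤ lam G u v) with hNZdef
  have hNZmem : ∀ {v u : Pt}, u ∈ NZ v ↔
      u ∈ nbhd G v ∧ 1 ≤ lam G v u ∧ 1 ≤ lam G u v := by
    intro v u; rw [hNZdef]; simp [Finset.mem_filter]
  -- ===== Step 2 : the master double count =====
  have step2 : ∑ v ∈ G.verts, ∑ u ∈ NZ v, lam G v u ≤ m * G.verts.card := by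
    have hupper : ∀ u ∈ G.verts, ∑ v ∈ (nbhd G u).erase (A u), lam G v u ≤ m := by
      intro u hu
      by_cases hne : (nbhd G u).Nonempty
      · obtain ⟨hA1, hA2⟩ := hA u ⟨hu, hne⟩
        calc ∑ v ∈ (nbhd G u).erase (A u), lam G v u
            ≤ (DJedge G s(u, A u)).card := core_count hG hconv hu hA1 hA2
          _ ≤ m := hm _ (edge_of_mem_nbhd hA1)
      · rw [Finset.not_nonempty_iff_eq_empty] at hne
        simp [hne]
    have hswap : ∑ v ∈ G.verts, ∑ u ∈ NZ v, lam G v u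
        ≤ ∑ u ∈ G.verts, ∑ v ∈ (nbhd G u).erase (A u), lam G v u := by
      rw [← Finset.sum_sigma G.verts NZ (fun p => lam G p.1 p.2),
        ← Finset.sum_sigma G.verts (fun u => (nbhd G u).erase (A u)) (fun p => lam G p.2 p.1)]
      have hinj : ∀ x ∈ G.verts.sigma NZ, ∀ y ∈ G.verts.sigma NZ,
          (⟨x.2, x.1⟩ : (_ : Pt) × Pt) = ⟨y.2, y.1⟩ → x = y := by
        rintro ⟨a, b⟩ _ ⟨c, d⟩ _ h
        have hb : b = d := congrArg Sigma.fst h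
        have ha : a = c := congrArg (fun p : (_ : Pt) × Pt => p.snd) h
        subst hb; subst ha; rfl
      have himg : ∑ p ∈ (G.verts.sigma NZ).image (fun p => (⟨p.2, p.1⟩ : (_ : Pt) × Pt)),
          lam G p.2 p.1 = ∑ p ∈ G.verts.sigma NZ, lam G p.1 p.2 :=
        Finset.sum_image hinj
      rw [← himg]
      apply Finset.sum_le_sum_of_subset
      intro p hp
      obtain ⟨⟨v, u⟩, hvu, rfl⟩ := Finset.mem_image.1 hp
      rw [Finset.mem_sigma] at hvu
      obtain ⟨hv, hu⟩ := hvu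
      rw [hNZmem] at hu
      rw [Finset.mem_sigma]
      have hunb : u ∈ nbhd G v := hu.1
      have huv : v ∈ nbhd G u := nbhd_symm hv hunb
      refine ⟨verts_of_mem_nbhd hunb, Finset.mem_erase.2 ⟨?_, huv⟩⟩
      intro hvA
      have hAu := hA u ⟨verts_of_mem_nbhd hunb, ⟨v, huv⟩⟩
      have h0 : lam G u (A u) = 0 := lam_max_eq_zero hAu.1 hAu.2
      have h1 : 1 ≤ lam G u v := hu.2.2
      have hvA' : v = A u := hvA
      rw [hvA'] at h1
      omega
    refine le_trans hswap (le_trans (Finset.sum_le_sum hupper) (le_of_eq ?_))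
    rw [Finset.sum_const, smul_eq_mul, mul_comm]
  -- ===== Step 1 : per-vertex distinct positive ranks =====
  have step1 : ∀ v ∈ G.verts, (NZ v).card * ((NZ v).card + 1) ≤ 2 * ∑ u ∈ NZ v, lam G v u := by
    intro v hv
    have hinj : ∀ x ∈ NZ v, ∀ y ∈ NZ v, lam G v x = lam G v y → x = y := by
      intro x hx y hy hxy
      by_contra hne
      exact lam_ne hG hconv hv (hNZmem.1 hx).1 (hNZmem.1 hy).1 hne hxy
    have himg : ∑ x ∈ (NZ v).image (lam G v), (fun x => x) x = ∑ u ∈ NZ v, lam G v u :=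
      Finset.sum_image hinj
    simp only [] at himg
    have hcard : ((NZ v).image (lam G v)).card = (NZ v).card :=
      Finset.card_image_of_injOn (fun x hx y hy => hinj x hx y hy)
    rw [← himg, ← hcard]
    apply nat_sum_distinct
    intro x hx
    obtain ⟨u, hu, rfl⟩ := Finset.mem_image.1 hx
    exact (hNZmem.1 hu).2.1
  -- ===== Step 3 : edge count =====
  have step3 : 2 * G.edges.card ≤ 2 * G.verts.card + ∑ v ∈ G.verts, (NZ v).card := by
    set Zp : Sym2 Pt → Prop := fun ε => ∃ x y, ε = s(x, y) ∧ x ∈ G.verts ∧ y ∈ nbhd G x ∧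
        lam G x y = 0 with hZpdef
    have hz : (G.edges.filter Zp).card ≤ G.verts.card := by
      apply Finset.card_le_card_of_injOn
        (fun ε => if h : Zp ε then h.choose else (0 : Pt))
      · intro ε hε
        have hZ : Zp ε := (Finset.mem_filter.1 hε).2
        simp only [dif_pos hZ]
        obtain ⟨y, h1, h2, h3, h4⟩ := hZ.choose_spec
        exact h2
      · intro ε hε ε' hε' heq
        have hZ : Zp ε := (Finset.mem_filter.1 (Finset.mem_coe.1 hε)).2
        have hZ' : Zp ε' := (Finset.mem_filter.1 (Finset.mem_coe.1 hε')).2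
        simp only [dif_pos hZ, dif_pos hZ'] at heq
        obtain ⟨y, h1, h2, h3, h4⟩ := hZ.choose_spec
        obtain ⟨y', h1', h2', h3', h4'⟩ := hZ'.choose_spec
        rw [← heq] at h1' h3' h4'
        have hyy : y = y' := by
          by_contra hne
          exact lam_ne hG hconv h2 h3 h3' hne (by rw [h4, h4'])
        rw [h1, h1', hyy]
    have hnzsub : G.edges.filter (fun ε => ¬ Zp ε) ⊆
        (G.verts.sigma NZ).image (fun p => s(p.1, p.2)) := by
      intro ε hε
      rw [Finset.mem_filter] at hε
      obtain ⟨hεe, hεnz⟩ := hε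
      revert hεe hεnz
      induction ε using Sym2.ind with
      | _ x y =>
        intro hεe hεnz
        have hx : x ∈ G.verts := (hG.1 _ hεe).2 x (Sym2.mem_mk_left x y)
        have hy : y ∈ G.verts := (hG.1 _ hεe).2 y (Sym2.mem_mk_right x y)
        have hyx : y ∈ nbhd G x := (mem_nbhd G).2 ⟨hy, hεe⟩
        have hxy : x ∈ nbhd G y := nbhd_symm hx hyx
        have h1 : 1 ≤ lam G x y := by
          rcases Nat.eq_zero_or_pos (lam G x y) with h | h
          · exact absurd ⟨x, y, rfl, hx, hyx, h⟩ hεnz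
          · exact h
        have h2 : 1 ≤ lam G y x := by
          rcases Nat.eq_zero_or_pos (lam G y x) with h | h
          · exact absurd ⟨y, x, Sym2.eq_swap.symm, hy, hxy, h⟩ hεnz
          · exact h
        exact Finset.mem_image.2 ⟨⟨x, y⟩,
          Finset.mem_sigma.2 ⟨hx, hNZmem.2 ⟨hyx, h1, h2⟩⟩, rfl⟩
    have h2img : 2 * ((G.verts.sigma NZ).image (fun p => s(p.1, p.2))).card ≤
        ∑ v ∈ G.verts, (NZ v).card := by
      rw [← Finset.card_sigma]
      rw [Finset.card_eq_sum_card_image (fun p => s(p.1, p.2)) (G.verts.sigma NZ)]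
      have hfib : ∀ ε ∈ (G.verts.sigma NZ).image (fun p => s(p.1, p.2)),
          2 ≤ ((G.verts.sigma NZ).filter (fun p => s(p.1, p.2) = ε)).card := by
        intro ε hε
        obtain ⟨⟨v, u⟩, hvu, rfl⟩ := Finset.mem_image.1 hε
        rw [Finset.mem_sigma] at hvu
        obtain ⟨hv, hu⟩ := hvu
        rw [hNZmem] at hu
        have hunb : u ∈ nbhd G v := hu.1
        have huv : v ∈ nbhd G u := nbhd_symm hv hunb
        have hnevu : u ≠ v := ne_of_mem_nbhd hG hunb
        have hpair : ({⟨v, u⟩, ⟨u, v⟩} : Finset ((_ : Pt) × Pt)) ⊆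
            (G.verts.sigma NZ).filter (fun p => s(p.1, p.2) = s(v, u)) := by
          intro p hp
          rcases Finset.mem_insert.1 hp with rfl | hp
          · exact Finset.mem_filter.2 ⟨Finset.mem_sigma.2 ⟨hv, hNZmem.2 hu⟩, rfl⟩
          · rw [Finset.mem_singleton.1 hp]
            refine Finset.mem_filter.2 ⟨Finset.mem_sigma.2
              ⟨verts_of_mem_nbhd hunb, hNZmem.2 ⟨huv, hu.2.2, hu.2.1⟩⟩, ?_⟩
            exact Sym2.eq_swap
        have hcard2 : ({⟨v, u⟩, ⟨u, v⟩} : Finset ((_ : Pt) × Pt)).card = 2 := by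
          rw [Finset.card_insert_of_notMem, Finset.card_singleton]
          intro hc
          rw [Finset.mem_singleton] at hc
          exact hnevu (congrArg (fun p : (_ : Pt) × Pt => p.snd) hc)
        calc (2 : ℕ) = ({⟨v, u⟩, ⟨u, v⟩} : Finset ((_ : Pt) × Pt)).card := hcard2.symm
          _ ≤ _ := Finset.card_le_card hpair
      calc 2 * ((G.verts.sigma NZ).image (fun p => s(p.1, p.2))).card
          = ∑ _ε ∈ (G.verts.sigma NZ).image (fun p => s(p.1, p.2)), 2 := by
            rw [Finset.sum_const, smul_eq_mul, mul_comm]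
        _ ≤ _ := Finset.sum_le_sum hfib
    have hsplit : (G.edges.filter Zp).card + (G.edges.filter (fun ε => ¬ Zp ε)).card
        = G.edges.card := Finset.card_filter_add_card_filter_not (p := Zp)
    have hnzcard : (G.edges.filter (fun ε => ¬ Zp ε)).card ≤
        ((G.verts.sigma NZ).image (fun p => s(p.1, p.2))).card := Finset.card_le_card hnzsub
    omega
  -- ===== final arithmetic =====
  have hquad : ∑ v ∈ G.verts, ((NZ v).card * ((NZ v).card + 1)) ≤ 2 * (m * G.verts.card) :=
    calc ∑ v ∈ G.verts, ((NZ v).card * ((NZ v).card + 1))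
        ≤ ∑ v ∈ G.verts, 2 * ∑ u ∈ NZ v, lam G v u := Finset.sum_le_sum step1
      _ = 2 * ∑ v ∈ G.verts, ∑ u ∈ NZ v, lam G v u := by rw [Finset.mul_sum]
      _ ≤ 2 * (m * G.verts.card) := Nat.mul_le_mul_left 2 step2
  have hmR : (0:ℝ) ≤ (m : ℝ) := Nat.cast_nonneg m
  have hnnn : (0:ℝ) ≤ (G.verts.card : ℝ) := Nat.cast_nonneg _
  have hsnn : (0:ℝ) ≤ ((∑ v ∈ G.verts, (NZ v).card : ℕ) : ℝ) := Nat.cast_nonneg _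
  have hCS : ((∑ v ∈ G.verts, (NZ v).card : ℕ) : ℝ) ^ 2
      ≤ (G.verts.card : ℝ) * ∑ v ∈ G.verts, ((NZ v).card : ℝ) ^ 2 := by
    have h0 := Finset.sum_mul_sq_le_sq_mul_sq G.verts
      (fun v => ((NZ v).card : ℝ)) (fun _ => (1 : ℝ))
    simp only [mul_one, one_pow] at h0
    rw [Finset.sum_const, nsmul_eq_mul, mul_one] at h0
    push_cast
    calc (∑ v ∈ G.verts, ((NZ v).card : ℝ)) ^ 2
        ≤ (∑ v ∈ G.verts, ((NZ v).card : ℝ) ^ 2) * (G.verts.card : ℝ) := h0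
      _ = (G.verts.card : ℝ) * ∑ v ∈ G.verts, ((NZ v).card : ℝ) ^ 2 := mul_comm _ _
  have hquadR : (∑ v ∈ G.verts, ((NZ v).card : ℝ) ^ 2)
      + ((∑ v ∈ G.verts, (NZ v).card : ℕ) : ℝ) ≤ 2 * (m : ℝ) * (G.verts.card : ℝ) := by
    have h0 : ((∑ v ∈ G.verts, ((NZ v).card * ((NZ v).card + 1)) : ℕ) : ℝ)
        ≤ ((2 * (m * G.verts.card) : ℕ) : ℝ) := Nat.cast_le.2 hquad
    push_cast at h0
    push_cast
    calc (∑ v ∈ G.verts, ((NZ v).card : ℝ) ^ 2) + ∑ v ∈ G.verts, ((NZ v).card : ℝ)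
        = ∑ v ∈ G.verts, (((NZ v).card : ℝ) * (((NZ v).card : ℝ) + 1)) := by
          rw [← Finset.sum_add_distrib]
          apply Finset.sum_congr rfl
          intro v _
          ring
      _ ≤ 2 * (m : ℝ) * (G.verts.card : ℝ) := by rw [mul_assoc]; exact h0
  have hkey : ((∑ v ∈ G.verts, (NZ v).card : ℕ) : ℝ) ^ 2
      + (G.verts.card : ℝ) * ((∑ v ∈ G.verts, (NZ v).card : ℕ) : ℝ)
      ≤ 2 * (m : ℝ) * (G.verts.card : ℝ) ^ 2 :=
    key_of _ _ _ _ hnnn hCS hquadR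
  have h3R : 2 * (G.edges.card : ℝ) ≤ 2 * (G.verts.card : ℝ)
      + ((∑ v ∈ G.verts, (NZ v).card : ℕ) : ℝ) := by
    exact_mod_cast step3
  exact final_bound _ _ _ _ hnnn hsnn hmR hkey h3R


end
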